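/- Let X be an archimedean prestreak. Then (1) for x ∈ X and q ∈ ℚ, x < q implies there exists r ∈ ℚ with x < r < q, and q < x implies there exists r ∈ ℚ with q < r < x; and (2) for x, y ∈ X, the following are equivalent: x < y; there exists q ∈ ℚ with x < q < y; there exist q, r ∈ ℚ with x < q < r < y. -/

import Mathlib

/-- A prestreak: a strict order (asymmetric and cotransitive) together with a
commutative additive monoid structure and a commutative multiplicative monoid
structure on the positive part, compatible with the order.  (The intrinsic
topology conditions of the paper are omitted, being vacuous in the classical
set-theoretic setting.) -/
structure Prestreak (X : Type*) where
  lt : X → X → Prop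
  add : X → X → X
  zero : X
  mul : X → X → X
  one : X
  lt_asymm : ∀ a b, ¬ (lt a b ∧ lt b a)
  lt_cotrans : ∀ a b x, lt a b → lt a x ∨ lt x b
  add_comm : ∀ a b, add a b = add b a
  add_assoc : ∀ a b c, add (add a b) c = add a (add b c)
  add_zero : ∀ a, add a zero = a
  zero_lt_one : lt zero one
  mul_pos : ∀ a b, lt zero a → lt zero b → lt zero (mul a b)
  mul_comm : ∀ a b, lt zero a → lt zero b → mul a b = mul b a
  mul_assoc : ∀ a b c, lt zero a → lt zero b → lt zero c →
    mul (mul a b) c = mul a (mul b c)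
  mul_one : ∀ a, lt zero a → mul a one = a
  mul_add : ∀ a b c, lt zero a → lt zero b → lt zero c →
    mul (add a b) c = add (mul a c) (mul b c)
  add_lt_add_iff : ∀ a b x, (lt (add a x) (add b x) ↔ lt a b)
  mul_lt_mul_iff : ∀ a b x, lt zero a → lt zero b → lt zero x →
    (lt (mul a x) (mul b x) ↔ lt a b)

namespace Prestreak

variable {X : Type*}

/-- Multiplication by a natural number: `0·a = 0`, `(n+1)·a = n·a + a`. -/
def nsmul (P : Prestreak X) : ℕ → X → X
  | 0, _ => P.zero
  | n + 1, a => P.add (nsmul P n a) a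

/-- The canonical image of a natural number, `n ↦ n·1`. -/
def ofNat (P : Prestreak X) (n : ℕ) : X := P.nsmul n P.one

/-- Comparison `x < q` of an element of a prestreak with a rational number,
using the canonical representation `q = (q.num⁺ − q.num⁻)/q.den`:
`x < (a−b)/c  :=  c·x + b < a`. -/
def ltQ (P : Prestreak X) (x : X) (q : ℚ) : Prop :=
  P.lt (P.add (P.nsmul q.den x) (P.ofNat ((-q.num).toNat))) (P.ofNat q.num.toNat)

/-- Comparison `q < x` of a rational with an element of a prestreak:
`(a−b)/c < x  :=  a < c·x + b`. -/
def qLt (P : Prestreak X) (q : ℚ) (x : X) : Prop :=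
  P.lt (P.ofNat q.num.toNat) (P.add (P.nsmul q.den x) (P.ofNat ((-q.num).toNat)))

/-- The archimedean property for prestreaks. -/
def Archimedean (P : Prestreak X) : Prop :=
  ∀ a b c d : X, P.lt b d →
    ∃ n : ℕ, P.lt (P.add a (P.nsmul n b)) (P.add c (P.nsmul n d))

/-- Tightness: antisymmetry of `≤` (where `a ≤ b := ¬ b < a`).
A streak is a tight archimedean prestreak. -/
def Tight (P : Prestreak X) : Prop :=
  ∀ a b : X, ¬ P.lt a b → ¬ P.lt b a → a = b

/-- The apartness relation `a # b := a < b ∨ b < a`. -/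
def Apart (P : Prestreak X) (a b : X) : Prop := P.lt a b ∨ P.lt b a

/-- A morphism of prestreaks: preserves `<`, `+`, `0`, `1` and products of
positive elements. -/
def IsHom {Y : Type*} (P : Prestreak X) (Q : Prestreak Y) (f : X → Y) : Prop :=
  (∀ a b, P.lt a b → Q.lt (f a) (f b)) ∧
  (∀ a b, f (P.add a b) = Q.add (f a) (f b)) ∧
  f P.zero = Q.zero ∧ f P.one = Q.one ∧
  (∀ a b, P.lt P.zero a → P.lt P.zero b → f (P.mul a b) = Q.mul (f a) (f b))

/-- A multiplicative structure on a prestreak: a total multiplication which is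
commutative, associative, distributes over addition, has unit `1`, restricts to
the given multiplication on positive elements, and satisfies the multiplicity
condition. -/
def IsMultiplicative (P : Prestreak X) (tmul : X → X → X) : Prop :=
  (∀ a b, tmul a b = tmul b a) ∧
  (∀ a b c, tmul (tmul a b) c = tmul a (tmul b c)) ∧
  (∀ a b c, tmul (P.add a b) c = P.add (tmul a c) (tmul b c)) ∧
  (∀ a, tmul a P.one = a) ∧
  (∀ a b, P.lt P.zero a → P.lt P.zero b → tmul a b = P.mul a b) ∧
  (∀ a b c d, P.lt b a → P.lt d c →
    P.lt (P.add (tmul a d) (tmul b c)) (P.add (tmul a c) (tmul b d)))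

end Prestreak

/-!
Writing `q = (a - b) / c`, the comparison `x < q` is `c • x + b • 1 < a • 1` in the monoid
`(X, +, 0)`; it is independent of the representation since `n • ·` (for `n ≠ 0`) and `· + e`
preserve and reflect `<`. For `u < v` the archimedean property gives `n ≠ 0` with
`n • u + 1 < n • v`: a gap of at least `1` between multiples. For the comparisons with `q` this
moves `q` by `1 / (n * q.den)`; for `x < y` it leaves room for an integer `j` with
`n • x < j < n • y`, found without a floor function by walking up in steps of `1` and using
cotransitivity of `<`.
-/

namespace Prestreak

variable {X : Type*}

/-- `X` with the operations of `P` as instances, so that Mathlib's algebra of `nsmul` applies;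
`P.nsmul n` and `P.ofNat n` are then definitionally `n • ·` and `n • 1`. -/
def Carrier (_P : Prestreak X) : Type _ := X

instance (P : Prestreak X) : AddCommMonoid P.Carrier where
  add := P.add
  zero := P.zero
  add_assoc := P.add_assoc
  add_zero := P.add_zero
  zero_add a := (P.add_comm P.zero a).trans (P.add_zero a)
  add_comm := P.add_comm
  nsmul := P.nsmul
  nsmul_zero _ := rfl
  nsmul_succ _ _ := rfl

instance (P : Prestreak X) : One P.Carrier := ⟨P.one⟩

instance (P : Prestreak X) : LT P.Carrier := ⟨P.lt⟩

section Order

variable {P : Prestreak X} {a b c d : P.Carrier}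

protected theorem not_lt_of_lt (h : a < b) : ¬ b < a := fun h' => P.lt_asymm a b ⟨h, h'⟩

protected theorem lt_trans (hab : a < b) (hbc : b < c) : a < c :=
  (P.lt_cotrans a b c hab).resolve_right (Prestreak.not_lt_of_lt hbc)

protected theorem zero_lt_one' : (0 : P.Carrier) < 1 := P.zero_lt_one

protected theorem add_lt_add_iff_right : a + c < b + c ↔ a < b := P.add_lt_add_iff a b c

protected theorem add_lt_add_iff_left : c + a < c + b ↔ a < b := by
  rw [_root_.add_comm c a, _root_.add_comm c b]
  exact Prestreak.add_lt_add_iff_right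

protected theorem add_lt_add (hab : a < b) (hcd : c < d) : a + c < b + d :=
  Prestreak.lt_trans (Prestreak.add_lt_add_iff_right.2 hab) (Prestreak.add_lt_add_iff_left.2 hcd)

theorem lt_or_lt_of_add_lt_add (h : a + c < b + d) : a < b ∨ c < d :=
  (P.lt_cotrans _ _ (b + c) h).imp Prestreak.add_lt_add_iff_right.1
    Prestreak.add_lt_add_iff_left.1

theorem succ_nsmul_lt_succ_nsmul_iff (n : ℕ) : (n + 1) • a < (n + 1) • b ↔ a < b := by
  induction n with
  | zero => simp only [zero_add, one_smul]
  | succ n ih =>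
    rw [succ_nsmul a (n + 1), succ_nsmul b (n + 1)]
    refine ⟨fun h => ?_, fun h => Prestreak.add_lt_add (ih.2 h) h⟩
    exact (lt_or_lt_of_add_lt_add h).elim ih.1 id

theorem nsmul_lt_nsmul_iff {n : ℕ} (hn : n ≠ 0) : n • a < n • b ↔ a < b := by
  obtain ⟨n, rfl⟩ := Nat.exists_eq_succ_of_ne_zero hn
  exact succ_nsmul_lt_succ_nsmul_iff n

theorem lt_iff_nsmul_add_lt_nsmul_add {n : ℕ} (hn : n ≠ 0) (e : P.Carrier) :
    a < b ↔ n • a + e < n • b + e := by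
  rw [Prestreak.add_lt_add_iff_right, nsmul_lt_nsmul_iff hn]

theorem nsmul_one_lt_nsmul_one {m k : ℕ} (h : m < k) : m • (1 : P.Carrier) < k • 1 := by
  obtain ⟨j, rfl⟩ := Nat.exists_eq_add_of_lt h
  have hpos : (0 : P.Carrier) < (j + 1) • 1 := by
    simpa only [nsmul_zero] using
      (succ_nsmul_lt_succ_nsmul_iff j).2 (Prestreak.zero_lt_one' (P := P))
  simpa only [_root_.add_zero, ← add_nsmul, _root_.add_assoc] using
    Prestreak.add_lt_add_iff_left (c := m • 1).2 hpos

end Order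

section Fraction

variable {P : Prestreak X}

theorem lt_iff_of_mul_add_eq (x : P.Carrier) {a b c a' b' c' : ℕ} (hc : c ≠ 0) (hc' : c' ≠ 0)
    (h : c' * a + c * b' = c * a' + c' * b) :
    (c • x + b • 1 < a • 1 ↔ c' • x + b' • 1 < a' • 1) ∧
      (a • 1 < c • x + b • 1 ↔ a' • 1 < c' • x + b' • 1) := by
  have key {u v u' v' : P.Carrier} (hu : c' • u + (c * b') • 1 = c • u' + (c' * b) • 1)
      (hv : c' • v + (c * b') • 1 = c • v' + (c' * b) • 1) : u < v ↔ u' < v' := by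
    rw [lt_iff_nsmul_add_lt_nsmul_add hc' ((c * b') • 1), hu, hv,
      ← lt_iff_nsmul_add_lt_nsmul_add hc]
  have hx : c' • (c • x + b • 1) + (c * b') • 1 = c • (c' • x + b' • 1) + (c' * b) • 1 := by
    simp only [smul_add, smul_smul, Nat.mul_comm c' c]
    abel
  have h1 : c' • (a • (1 : P.Carrier)) + (c * b') • 1 = c • (a' • 1) + (c' * b) • 1 := by
    rw [smul_smul, smul_smul, ← add_nsmul, ← add_nsmul, h]
  exact ⟨key hx h1, key h1 hx⟩

theorem _root_.Rat.eq_num_toNat_sub_neg_num_toNat_div_den (q : ℚ) :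
    q = ((q.num.toNat : ℚ) - (-q.num).toNat) / q.den := by
  have h : ((q.num.toNat : ℤ) : ℚ) - ((-q.num).toNat : ℤ) = q.num := by
    exact_mod_cast Int.toNat_sub_toNat_neg q.num
  push_cast at h
  rw [h, Rat.num_div_den]

theorem ltQ_and_qLt_iff (x : P.Carrier) {q : ℚ} {a b c : ℕ} (hc : c ≠ 0)
    (hq : q = ((a : ℚ) - b) / c) :
    (P.ltQ x q ↔ c • x + b • 1 < a • 1) ∧ (P.qLt q x ↔ a • 1 < c • x + b • 1) := by
  refine lt_iff_of_mul_add_eq x q.den_nz hc ?_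
  have hcan := q.eq_num_toNat_sub_neg_num_toNat_div_den
  rw [hcan, div_eq_div_iff (by exact_mod_cast q.den_nz) (by exact_mod_cast hc)] at hq
  exact_mod_cast (by linarith : (c : ℚ) * q.num.toNat + q.den * b = q.den * a + c * (-q.num).toNat)

theorem ltQ_iff (x : P.Carrier) {q : ℚ} {a b c : ℕ} (hc : c ≠ 0) (hq : q = ((a : ℚ) - b) / c) :
    P.ltQ x q ↔ c • x + b • 1 < a • 1 :=
  (ltQ_and_qLt_iff x hc hq).1

theorem qLt_iff (x : P.Carrier) {q : ℚ} {a b c : ℕ} (hc : c ≠ 0) (hq : q = ((a : ℚ) - b) / c) :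
    P.qLt q x ↔ a • 1 < c • x + b • 1 :=
  (ltQ_and_qLt_iff x hc hq).2

end Fraction

section Archimedean

variable {P : Prestreak X}

theorem Archimedean.exists_add_nsmul_lt_add_nsmul (hA : P.Archimedean) (a c : P.Carrier)
    {b d : P.Carrier} (h : b < d) : ∃ n : ℕ, a + n • b < c + n • d :=
  hA a b c d h

theorem exists_nsmul_one_between_of_lt_nsmul_one {z w : P.Carrier} (h : z + 1 < w) (m : ℕ)
    {k : ℕ} (hk : k • 1 < w) (hz : z < (k + m) • 1) : ∃ j : ℕ, z < j • 1 ∧ j • 1 < w := by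
  induction m generalizing k with
  | zero => exact ⟨k, hz, hk⟩
  | succ m ih =>
    -- `(k + 1) • 1` lies either above `z + 1`, so that `k • 1` lies above `z`, or below `w`
    rcases P.lt_cotrans _ _ ((k + 1) • (1 : P.Carrier)) h with hzk | hkw
    · exact ⟨k, Prestreak.add_lt_add_iff_right.1 (by rwa [succ_nsmul] at hzk), hk⟩
    · exact ih hkw (by rwa [Nat.add_right_comm, Nat.add_assoc])

theorem exists_lt_nsmul_one (hA : P.Archimedean) (z : P.Carrier) : ∃ n : ℕ, z < n • 1 := by
  obtain ⟨n, hn⟩ := hA.exists_add_nsmul_lt_add_nsmul z 0 Prestreak.zero_lt_one'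
  exact ⟨n, by simpa only [nsmul_zero, _root_.add_zero, _root_.zero_add] using hn⟩

theorem exists_pos_add_nsmul_one (hA : P.Archimedean) (z : P.Carrier) :
    ∃ n : ℕ, 0 < z + n • 1 := by
  obtain ⟨n, hn⟩ := hA.exists_add_nsmul_lt_add_nsmul 0 z Prestreak.zero_lt_one'
  exact ⟨n, by simpa only [nsmul_zero, _root_.add_zero] using hn⟩

theorem exists_nsmul_add_one_lt_nsmul (hA : P.Archimedean) {a b : P.Carrier} (h : a < b) :
    ∃ n : ℕ, n ≠ 0 ∧ n • a + 1 < n • b := by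
  obtain ⟨n, h1n⟩ := hA.exists_add_nsmul_lt_add_nsmul 1 0 h
  have hn : n • a + 1 < n • b := by
    simpa only [_root_.add_comm (1 : P.Carrier), _root_.zero_add] using h1n
  refine ⟨n, ?_, hn⟩
  rintro rfl
  simp only [zero_smul, _root_.zero_add] at hn
  exact Prestreak.not_lt_of_lt Prestreak.zero_lt_one' hn

theorem exists_nat_between (hA : P.Archimedean) {z w : P.Carrier} (h : z + 1 < w) :
    ∃ j b : ℕ, z + b • 1 < j • 1 ∧ j • 1 < w + b • 1 := by
  obtain ⟨b, hb⟩ := exists_pos_add_nsmul_one hA w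
  obtain ⟨m, hm⟩ := exists_lt_nsmul_one hA (z + b • 1)
  have h' : z + b • 1 + 1 < w + b • 1 := by
    rwa [add_right_comm, Prestreak.add_lt_add_iff_right]
  obtain ⟨j, hj⟩ := exists_nsmul_one_between_of_lt_nsmul_one h' m (k := 0)
    (by rwa [zero_smul]) (by rwa [Nat.zero_add])
  exact ⟨j, b, hj⟩

end Archimedean

section Density

variable {P : Prestreak X}

theorem lt_of_ltQ_of_qLt {x y : P.Carrier} {q : ℚ} (hx : P.ltQ x q) (hy : P.qLt q y) : x < y :=
  (lt_iff_nsmul_add_lt_nsmul_add q.den_nz _).2 (Prestreak.lt_trans hx hy)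

theorem ltQ_of_ltQ_of_lt {x : P.Carrier} {q r : ℚ} (hx : P.ltQ x q) (hqr : q < r) :
    P.ltQ x r := by
  have hq := q.eq_num_toNat_sub_neg_num_toNat_div_den
  have hr := r.eq_num_toNat_sub_neg_num_toNat_div_den
  have hcc' : q.den * r.den ≠ 0 := mul_ne_zero q.den_nz r.den_nz
  set a := q.num.toNat
  set b := (-q.num).toNat
  set c := q.den
  set a' := r.num.toNat
  set b' := (-r.num).toNat
  set c' := r.den
  have hc : (c : ℚ) ≠ 0 := by exact_mod_cast q.den_nz
  have hc' : (c' : ℚ) ≠ 0 := by exact_mod_cast r.den_nz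
  -- `q` and `r` over the common denominator `c * c'`, with a common subtrahend
  have hq' : q = ((a * c' + b' * c : ℕ) - (b * c' + b' * c : ℕ) : ℚ) / (c * c' : ℕ) := by
    rw [hq]; push_cast; field_simp; ring
  have hr' : r = ((a' * c + b * c' : ℕ) - (b * c' + b' * c : ℕ) : ℚ) / (c * c' : ℕ) := by
    rw [hr]; push_cast; field_simp; ring
  have hlt : a * c' + b' * c < a' * c + b * c' := by
    rw [hq, hr, div_lt_div_iff₀ (by positivity) (by positivity)] at hqr
    exact_mod_cast (by linarith : (a : ℚ) * c' + b' * c < a' * c + b * c')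
  rw [ltQ_iff x hcc' hq'] at hx
  exact (ltQ_iff x hcc' hr').2 (Prestreak.lt_trans hx (nsmul_one_lt_nsmul_one hlt))

theorem exists_ltQ_qLt_of_lt (hA : P.Archimedean) {x y : P.Carrier} (h : x < y) :
    ∃ q : ℚ, P.ltQ x q ∧ P.qLt q y := by
  obtain ⟨n, hn, hxy⟩ := exists_nsmul_add_one_lt_nsmul hA h
  obtain ⟨j, b, hxj, hjy⟩ := exists_nat_between hA hxy
  exact ⟨((j : ℚ) - b) / n, (ltQ_iff x hn rfl).2 hxj, (qLt_iff y hn rfl).2 hjy⟩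

theorem exists_ltQ_lt_of_ltQ (hA : P.Archimedean) {x : P.Carrier} {q : ℚ} (h : P.ltQ x q) :
    ∃ r : ℚ, P.ltQ x r ∧ r < q := by
  have hq := q.eq_num_toNat_sub_neg_num_toNat_div_den
  have hc := q.den_nz
  set a := q.num.toNat
  set b := (-q.num).toNat
  set c := q.den
  obtain ⟨n, hn, hxq⟩ := exists_nsmul_add_one_lt_nsmul hA (show c • x + b • 1 < a • 1 from h)
  refine ⟨((n * a : ℕ) - (n * b + 1 : ℕ) : ℚ) / (n * c : ℕ),
    (ltQ_iff x (mul_ne_zero hn hc) rfl).2 ?_, ?_⟩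
  · simpa only [smul_add, smul_smul, add_nsmul, one_nsmul, _root_.add_assoc] using hxq
  · rw [hq, div_lt_div_iff₀ (by positivity) (by positivity)]
    have hc0 : (0 : ℚ) < c := by exact_mod_cast Nat.pos_of_ne_zero hc
    push_cast
    linear_combination hc0

theorem exists_lt_qLt_of_qLt (hA : P.Archimedean) {x : P.Carrier} {q : ℚ} (h : P.qLt q x) :
    ∃ r : ℚ, q < r ∧ P.qLt r x := by
  have hq := q.eq_num_toNat_sub_neg_num_toNat_div_den
  have hc := q.den_nz
  set a := q.num.toNat
  set b := (-q.num).toNat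
  set c := q.den
  obtain ⟨n, hn, hqx⟩ := exists_nsmul_add_one_lt_nsmul hA (show a • 1 < c • x + b • 1 from h)
  refine ⟨((n * a + 1 : ℕ) - (n * b : ℕ) : ℚ) / (n * c : ℕ), ?_,
    (qLt_iff x (mul_ne_zero hn hc) rfl).2 ?_⟩
  · rw [hq, div_lt_div_iff₀ (by positivity) (by positivity)]
    have hc0 : (0 : ℚ) < c := by exact_mod_cast Nat.pos_of_ne_zero hc
    push_cast
    linear_combination hc0
  · simpa only [smul_add, smul_smul, add_nsmul, one_nsmul, _root_.add_comm _ (1 : P.Carrier)]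
      using hqx

theorem lt_iff_exists_ltQ_qLt (hA : P.Archimedean) {x y : P.Carrier} :
    x < y ↔ ∃ q : ℚ, P.ltQ x q ∧ P.qLt q y :=
  ⟨exists_ltQ_qLt_of_lt hA, fun ⟨_, hxq, hqy⟩ => lt_of_ltQ_of_qLt hxq hqy⟩

theorem lt_iff_exists_ltQ_lt_qLt (hA : P.Archimedean) {x y : P.Carrier} :
    x < y ↔ ∃ q r : ℚ, P.ltQ x q ∧ q < r ∧ P.qLt r y := by
  constructor
  · intro hxy
    obtain ⟨q, hxq, hqy⟩ := exists_ltQ_qLt_of_lt hA hxy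
    obtain ⟨r, hqr, hry⟩ := exists_lt_qLt_of_qLt hA hqy
    exact ⟨q, r, hxq, hqr, hry⟩
  · rintro ⟨q, r, hxq, hqr, hry⟩
    exact lt_of_ltQ_of_qLt (ltQ_of_ltQ_of_lt hxq hqr) hry

end Density

end Prestreak

open Prestreak in
/-- Density of the rationals in an archimedean prestreak. -/
theorem rationals_dense_in_archimedean_prestreak {X : Type*} (P : Prestreak X)
    (hA : P.Archimedean) :
    (∀ (x : X) (q : ℚ), P.ltQ x q → ∃ r : ℚ, P.ltQ x r ∧ r < q) ∧
    (∀ (x : X) (q : ℚ), P.qLt q x → ∃ r : ℚ, q < r ∧ P.qLt r x) ∧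
    (∀ x y : X,
      (P.lt x y ↔ ∃ q : ℚ, P.ltQ x q ∧ P.qLt q y) ∧
      (P.lt x y ↔ ∃ q r : ℚ, P.ltQ x q ∧ q < r ∧ P.qLt r y)) :=
  ⟨fun _ _ => exists_ltQ_lt_of_ltQ hA, fun _ _ => exists_lt_qLt_of_qLt hA,
    fun _ _ => ⟨lt_iff_exists_ltQ_qLt hA, lt_iff_exists_ltQ_lt_qLt hA⟩⟩
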